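/- (Theorem 2, accuracy–sparsity trade-off of Binary Matching Pursuit.) Let E be a finite-dimensional real inner product space, fix X ∈ E, and define F(W) = (1/2)‖X − W‖². Let 𝔸 ⊆ E be a nonempty compact symmetric set of atoms, with atomic norm ‖W‖_𝔸 = inf{ Σ_M |c_M| : W = Σ_M c_M M, a finite linear combination of atoms M ∈ 𝔸 }. Let μ ∈ (0,1] and β > 0 with ‖Δ‖ ≤ √β · ‖Δ‖_𝔸 for all Δ in the span of 𝔸, and let (W^k) be the Binary Matching Pursuit iterates: W^0 = 0, A^0 = ∅, and for each k ≥ 1 an atom M^k ∈ 𝔸 with ⟨∇F(W^{k−1}), M^k⟩ ≤ μ · min_{M ∈ 𝔸} ⟨∇F(W^{k−1}), M⟩, A^k = A^{k−1} ∪ {M^k}, and W^k minimizing F over the span of A^k. Suppose W* = Σ_{M ∈ Ā} c*_M M for a finite subset Ā ⊆ 𝔸 of size K̄, where c* is the minimizer of the function f(c) = F(Σ_{M ∈ Ā} c_M M) on ℝ^{Ā}, and suppose f is γ-strongly convex for some γ > 0. Then for every K ≥ 1, F(W^K) − F(W*) ≤ (2β‖X‖²/(γμ²)) · (K̄/K).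 -/

import Mathlib

open scoped RealInnerProductSpace

/-!
Let `g_k = W^k - X` be the gradient at the `k`-th iterate and `s_k = max_{M ∈ 𝔸} |⟨g_k, M⟩|`,
which is `-min_{M ∈ 𝔸} ⟨g_k, M⟩` because `𝔸` is symmetric. Atoms have norm at most `√β`, so
a step of length `μ s_k / β` along the greedy atom already lowers `F` by `μ² s_k² / (2β)`, and
the fully corrective step does at least as well. Since `W^k` minimizes `F` on a subspace
containing it, `g_k ⟂ W^k`, whence `F(W^k) - F(W*) ≤ -⟨g_k, W*⟩ ≤ s_k ‖c*‖₁`. Strong convexity at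
the minimizer `c*` gives `(γ/2)‖c*‖² ≤ f(0) - f(c*) ≤ ‖X‖²/2`, so `‖c*‖₁² ≤ K̄ ‖X‖²/γ`.
Together, the gap `h_k` satisfies `h_k² ≤ D (h_k - h_{k+1})` with `D = 2βK̄‖X‖²/(γμ²)`, and
then `1/h_k` grows by at least `1/D` per step.
-/

noncomputable def atomicNorm {E : Type*} [NormedAddCommGroup E] [InnerProductSpace ℝ E]
    (A : Set E) (W : E) : ℝ :=
  sInf {s : ℝ | ∃ (n : ℕ) (c : Fin n → ℝ) (M : Fin n → E),
    (∀ i, M i ∈ A) ∧ W = ∑ i, c i • M i ∧ s = ∑ i, |c i|}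

theorem nat_mul_le_of_sq_le_mul_sub {h : ℕ → ℝ} {D : ℝ} (hD : 0 ≤ D) (hanti : Antitone h)
    (hrec : ∀ k, 0 < h k → h k ^ 2 ≤ D * (h k - h (k + 1))) (K : ℕ) : K * h K ≤ D := by
  have key : ∀ K : ℕ, 0 < h K → (K : ℝ) ≤ D / h K := by
    intro K
    induction K with
    | zero => intro hpos; simpa using div_nonneg hD hpos.le
    | succ K ih =>
      intro hpos
      have hK : 0 < h K := hpos.trans_le (hanti K.le_succ)
      have hstep : D / h K + 1 ≤ D / h (K + 1) := by
        rw [div_add_one hK.ne', div_le_div_iff₀ hK hpos]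
        nlinarith [hrec K hK, hanti K.le_succ]
      push_cast
      linarith [ih hK]
  rcases le_or_gt (h K) 0 with hle | hpos
  · exact (mul_nonpos_of_nonneg_of_nonpos K.cast_nonneg hle).trans hD
  · exact (le_div_iff₀ hpos).1 (key K hpos)

theorem nat_mul_le_of_le_mul_of_mul_sq_le_sub {h s : ℕ → ℝ} {a b : ℝ} (ha : 0 < a)
    (hgap : ∀ k, h k ≤ s k * b) (hdecr : ∀ k, a * s k ^ 2 ≤ h k - h (k + 1)) (K : ℕ) :
    K * h K ≤ b ^ 2 / a := by
  refine nat_mul_le_of_sq_le_mul_sub (by positivity)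
    (antitone_nat_of_succ_le fun k => ?_) (fun k hk => ?_) K
  · nlinarith [hdecr k, sq_nonneg (s k)]
  · calc h k ^ 2 ≤ (s k * b) ^ 2 := pow_le_pow_left₀ hk.le (hgap k) 2
      _ = b ^ 2 / a * (a * s k ^ 2) := by field_simp
      _ ≤ b ^ 2 / a * (h k - h (k + 1)) := mul_le_mul_of_nonneg_left (hdecr k) (by positivity)

theorem sq_sum_abs_le_card_mul_norm_sq {ι : Type*} [Fintype ι] (c : EuclideanSpace ℝ ι) :
    (∑ i, |c i|) ^ 2 ≤ Fintype.card ι * ‖c‖ ^ 2 := by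
  simpa [EuclideanSpace.real_norm_sq_eq, sq_abs] using
    sq_sum_le_card_mul_sum_sq (s := Finset.univ) (f := fun i => |c i|)

theorem mul_norm_sub_sq_le_sub_of_strongly_convex {V : Type*} [NormedAddCommGroup V]
    [InnerProductSpace ℝ V] [CompleteSpace V] {f : V → ℝ} {γ : ℝ}
    (hstrong : ∀ a b : V, f a ≥ f b + ⟪gradient f b, a - b⟫ + (γ / 2) * ‖a - b‖ ^ 2)
    {c : V} (hmin : ∀ a, f c ≤ f a) (a : V) : (γ / 2) * ‖a - c‖ ^ 2 ≤ f a - f c := by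
  have hgrad : gradient f c = 0 := by
    rw [gradient, (IsLocalMin.fderiv_eq_zero (.of_forall hmin)), map_zero]
  have := hstrong a c
  rw [hgrad, inner_zero_left] at this
  linarith

theorem sq_sum_abs_le_of_strongly_convex {ι : Type*} [Fintype ι]
    {f : EuclideanSpace ℝ ι → ℝ} {γ : ℝ} (hγ : 0 < γ)
    (hstrong : ∀ a b, f a ≥ f b + ⟪gradient f b, a - b⟫ + (γ / 2) * ‖a - b‖ ^ 2)
    {c : EuclideanSpace ℝ ι} (hmin : ∀ a, f c ≤ f a) :
    (∑ i, |c i|) ^ 2 ≤ Fintype.card ι * (2 * (f 0 - f c) / γ) := by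
  have hgrowth := mul_norm_sub_sq_le_sub_of_strongly_convex hstrong hmin 0
  rw [zero_sub, norm_neg] at hgrowth
  exact (sq_sum_abs_le_card_mul_norm_sq c).trans
    (mul_le_mul_of_nonneg_left ((le_div_iff₀ hγ).2 (by linarith)) (Nat.cast_nonneg _))

section InnerProductSpace

variable {E : Type*} [NormedAddCommGroup E] [InnerProductSpace ℝ E]

theorem atomicNorm_le_one {A : Set E} {M : E} (hM : M ∈ A) : atomicNorm A M ≤ 1 := by
  refine csInf_le ⟨0, ?_⟩ ⟨1, fun _ => 1, fun _ => M, fun _ => hM, by simp, by simp⟩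
  rintro _ ⟨n, c, -, -, -, rfl⟩
  positivity

theorem norm_le_sqrt_of_mem {A : Set E} {β : ℝ}
    (hsmooth : ∀ Δ ∈ Submodule.span ℝ A, ‖Δ‖ ≤ Real.sqrt β * atomicNorm A Δ)
    {M : E} (hM : M ∈ A) : ‖M‖ ≤ Real.sqrt β :=
  (hsmooth M (Submodule.subset_span hM)).trans <| by
    simpa using mul_le_mul_of_nonneg_left (atomicNorm_le_one hM) (Real.sqrt_nonneg β)

theorem bddBelow_inner_image {A : Set E} {r : ℝ} (hA : ∀ M ∈ A, ‖M‖ ≤ r) (g : E) :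
    BddBelow ((fun M => ⟪g, M⟫) '' A) := by
  refine ⟨-(‖g‖ * r), ?_⟩
  rintro _ ⟨M, hM, rfl⟩
  have := (abs_le.1 (abs_real_inner_le_norm g M)).1
  nlinarith [norm_nonneg g, hA M hM]

theorem abs_inner_le_neg_sInf {A : Set E} {g : E} (hbdd : BddBelow ((fun M => ⟪g, M⟫) '' A))
    (hAs : ∀ M ∈ A, -M ∈ A) {M : E} (hM : M ∈ A) :
    |⟪g, M⟫| ≤ -sInf ((fun M => ⟪g, M⟫) '' A) := by
  have h₁ := csInf_le hbdd ⟨M, hM, rfl⟩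
  have h₂ := csInf_le hbdd ⟨-M, hAs M hM, rfl⟩
  simp only [inner_neg_right] at h₂
  exact abs_le.2 ⟨by linarith, by linarith⟩

theorem abs_inner_sum_smul_le {ι : Type*} [Fintype ι] {g : E} {s : ℝ} (c : ι → ℝ)
    (M : ι → E) (h : ∀ i, |⟪g, M i⟫| ≤ s) : |⟪g, ∑ i, c i • M i⟫| ≤ s * ∑ i, |c i| := by
  rw [inner_sum, Finset.mul_sum]
  refine (Finset.abs_sum_le_sum_abs _ _).trans (Finset.sum_le_sum fun i _ => ?_)
  rw [real_inner_smul_right, abs_mul, mul_comm s]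
  exact mul_le_mul_of_nonneg_left (h i) (abs_nonneg _)

variable {X : E} {F : E → ℝ}

theorem eq_add_inner_add_of_half_norm_sq (hF : ∀ W, F W = (1 / 2) * ‖X - W‖ ^ 2) (u v : E) :
    F v = F u + ⟪u - X, v - u⟫ + (1 / 2) * ‖v - u‖ ^ 2 := by
  rw [hF, hF, show X - v = (X - u) - (v - u) by abel, norm_sub_sq_real,
    ← neg_sub X u, inner_neg_left]
  ring

theorem inner_sub_eq_zero_of_forall_le (hF : ∀ W, F W = (1 / 2) * ‖X - W‖ ^ 2)
    {S : Submodule ℝ E} {w : E} (hw : w ∈ S) (hmin : ∀ v ∈ S, F w ≤ F v) {v : E}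
    (hv : v ∈ S) : ⟪w - X, v⟫ = 0 := by
  have hnorm : ∀ v ∈ S, ‖X - w‖ ≤ ‖X - v‖ := fun v hv =>
    (pow_le_pow_iff_left₀ (norm_nonneg _) (norm_nonneg _) two_ne_zero).1 <| by
      linarith [hmin v hv, hF w, hF v]
  have hinf : ‖X - w‖ = ⨅ v : (S : Set E), ‖X - v‖ :=
    le_antisymm (le_ciInf fun v => hnorm v v.2)
      (ciInf_le ⟨0, Set.forall_mem_range.2 fun _ => norm_nonneg _⟩ (⟨w, hw⟩ : (S : Set E)))
  rw [← neg_sub X w, inner_neg_left, (S.norm_eq_iInf_iff_real_inner_eq_zero hw).1 hinf v hv,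
    neg_zero]

theorem le_sub_sq_div_of_inner_le (hF : ∀ W, F W = (1 / 2) * ‖X - W‖ ^ 2) {β a : ℝ}
    (hβ : 0 < β) (ha : 0 ≤ a) {w M : E} (hM : ‖M‖ ^ 2 ≤ β) (hinner : ⟪w - X, M⟫ ≤ -a) :
    F (w + (a / β) • M) ≤ F w - a ^ 2 / (2 * β) := by
  have ht : 0 ≤ a / β := div_nonneg ha hβ.le
  rw [eq_add_inner_add_of_half_norm_sq hF w, add_sub_cancel_left, real_inner_smul_right,
    norm_smul, mul_pow, Real.norm_of_nonneg ht]
  have h₁ := mul_le_mul_of_nonneg_left hinner ht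
  have h₂ := mul_le_mul_of_nonneg_left hM (sq_nonneg (a / β))
  have h₃ : a / β * -a + (1 / 2) * ((a / β) ^ 2 * β) = -(a ^ 2 / (2 * β)) := by
    field_simp
    ring
  linarith

theorem sub_le_neg_inner_of_inner_self_eq_zero (hF : ∀ W, F W = (1 / 2) * ‖X - W‖ ^ 2)
    {w : E} (hw : ⟪w - X, w⟫ = 0) (v : E) : F w - F v ≤ -⟪w - X, v⟫ := by
  rw [eq_add_inner_add_of_half_norm_sq hF w v, inner_sub_right, hw]
  nlinarith [sq_nonneg ‖v - w‖]

theorem sub_le_neg_sInf_mul_of_inner_self_eq_zero (hF : ∀ W, F W = (1 / 2) * ‖X - W‖ ^ 2)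
    {A : Set E} {r : ℝ} (hA : ∀ M ∈ A, ‖M‖ ≤ r) (hAs : ∀ M ∈ A, -M ∈ A) {ι : Type*}
    [Fintype ι] (c : ι → ℝ) {M : ι → E} (hMA : ∀ i, M i ∈ A) {w : E} (hw : ⟪w - X, w⟫ = 0) :
    F w - F (∑ i, c i • M i) ≤ -sInf ((fun M => ⟪w - X, M⟫) '' A) * ∑ i, |c i| :=
  (sub_le_neg_inner_of_inner_self_eq_zero hF hw _).trans <| (neg_le_abs _).trans <|
    abs_inner_sum_smul_le _ _ fun i => abs_inner_le_neg_sInf (bddBelow_inner_image hA _) hAs (hMA i)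

theorem greedy_step_decrease (hF : ∀ W, F W = (1 / 2) * ‖X - W‖ ^ 2) {A : Set E} {β μ : ℝ}
    (hβ : 0 < β) (hμ : 0 ≤ μ) (hA : ∀ M ∈ A, ‖M‖ ≤ Real.sqrt β) (hAs : ∀ M ∈ A, -M ∈ A)
    {S : Submodule ℝ E} {w w' M : E} (hw : w ∈ S) (hMS : M ∈ S) (hMA : M ∈ A)
    (hgreedy : ⟪w - X, M⟫ ≤ μ * sInf ((fun M => ⟪w - X, M⟫) '' A))
    (hw' : ∀ v ∈ S, F w' ≤ F v) :
    μ ^ 2 / (2 * β) * sInf ((fun M => ⟪w - X, M⟫) '' A) ^ 2 ≤ F w - F w' := by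
  set m := sInf ((fun M => ⟪w - X, M⟫) '' A)
  have hm : 0 ≤ -m :=
    (abs_nonneg _).trans (abs_inner_le_neg_sInf (bddBelow_inner_image hA _) hAs hMA)
  have hstep := (hw' _ (S.add_mem hw (S.smul_mem _ hMS))).trans
    (le_sub_sq_div_of_inner_le hF hβ (a := -(μ * m)) (by nlinarith)
      ((Real.le_sqrt (norm_nonneg _) hβ.le).1 (hA M hMA)) (by simpa using hgreedy))
  have hsq : (-(μ * m)) ^ 2 / (2 * β) = μ ^ 2 / (2 * β) * m ^ 2 := by ring
  linarith

section Iterates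

variable {W Msel : ℕ → E}

theorem iterate_mem_span (hW0 : W 0 = 0)
    (hmem : ∀ k, W (k + 1) ∈ Submodule.span ℝ (Msel '' Set.Iic k)) (k : ℕ) :
    W k ∈ Submodule.span ℝ (Msel '' Set.Iic k) := by
  cases k with
  | zero => simp [hW0]
  | succ k =>
    exact Submodule.span_mono (Set.image_mono (Set.Iic_subset_Iic.2 k.le_succ)) (hmem k)

theorem inner_iterate_sub_self_eq_zero (hF : ∀ W, F W = (1 / 2) * ‖X - W‖ ^ 2) (hW0 : W 0 = 0)
    (hmem : ∀ k, W (k + 1) ∈ Submodule.span ℝ (Msel '' Set.Iic k))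
    (hcorr : ∀ k, ∀ W' ∈ Submodule.span ℝ (Msel '' Set.Iic k), F (W (k + 1)) ≤ F W')
    (k : ℕ) : ⟪W k - X, W k⟫ = 0 := by
  cases k with
  | zero => simp [hW0]
  | succ k => exact inner_sub_eq_zero_of_forall_le hF (hmem k) (hcorr k) (hmem k)

end Iterates

end InnerProductSpace

theorem stmt_12_general {E : Type*} [NormedAddCommGroup E] [InnerProductSpace ℝ E]
    (X : E) (F : E → ℝ) (hF : ∀ W, F W = (1 / 2) * ‖X - W‖ ^ 2)
    (A : Set E) (hAs : ∀ M ∈ A, -M ∈ A)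
    (μ β : ℝ) (hμ : μ ∈ Set.Ioc (0 : ℝ) 1) (hβ : 0 < β)
    (hsmooth : ∀ Δ ∈ Submodule.span ℝ A, ‖Δ‖ ≤ Real.sqrt β * atomicNorm A Δ)
    (W : ℕ → E) (Msel : ℕ → E)
    (hW0 : W 0 = 0)
    (hMsel : ∀ k, Msel k ∈ A)
    (hgreedy : ∀ k, ⟪W k - X, Msel k⟫ ≤ μ * sInf ((fun M => ⟪W k - X, M⟫) '' A))
    (hmem : ∀ k, W (k + 1) ∈ Submodule.span ℝ (Msel '' Set.Iic k))
    (hcorr : ∀ k, ∀ W' ∈ Submodule.span ℝ (Msel '' Set.Iic k), F (W (k + 1)) ≤ F W')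
    (Kbar : ℕ) (Matoms : Fin Kbar → E)
    (hMA : ∀ i, Matoms i ∈ A)
    (γ : ℝ) (hγ : 0 < γ)
    (f : EuclideanSpace ℝ (Fin Kbar) → ℝ)
    (hfdef : ∀ c, f c = F (∑ i, c i • Matoms i))
    (hstrong : ∀ a b : EuclideanSpace ℝ (Fin Kbar),
      f a ≥ f b + ⟪gradient f b, a - b⟫ + (γ / 2) * ‖a - b‖ ^ 2)
    (cstar : EuclideanSpace ℝ (Fin Kbar)) (hcmin : ∀ c, f cstar ≤ f c)
    (Wstar : E) (hWstar : Wstar = ∑ i, cstar i • Matoms i) :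
    ∀ K : ℕ, 1 ≤ K →
      F (W K) - F Wstar ≤ (2 * β * ‖X‖ ^ 2 / (γ * μ ^ 2)) * ((Kbar : ℝ) / (K : ℝ)) := by
  intro K hK
  set s : ℕ → ℝ := fun k => sInf ((fun M => ⟪W k - X, M⟫) '' A)
  have hatom : ∀ M ∈ A, ‖M‖ ≤ Real.sqrt β := fun M hM => norm_le_sqrt_of_mem hsmooth hM
  have hdecr : ∀ k, μ ^ 2 / (2 * β) * (-s k) ^ 2 ≤
      F (W k) - F Wstar - (F (W (k + 1)) - F Wstar) := fun k => by
    simpa only [neg_sq, sub_sub_sub_cancel_right] using greedy_step_decrease hF hβ hμ.1.le hatom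
      hAs (iterate_mem_span hW0 hmem k) (Submodule.subset_span ⟨k, Set.mem_Iic.2 le_rfl, rfl⟩)
      (hMsel k) (hgreedy k) (hcorr k)
  have hgap : ∀ k, F (W k) - F Wstar ≤ -s k * ∑ i, |cstar i| := fun k =>
    hWstar ▸ sub_le_neg_sInf_mul_of_inner_self_eq_zero hF hatom hAs _ hMA
      (inner_iterate_sub_self_eq_zero hF hW0 hmem hcorr k)
  have hf : f 0 - f cstar ≤ (1 / 2) * ‖X‖ ^ 2 := by
    have : 0 ≤ f cstar := by rw [hfdef, hF]; positivity
    simp only [hfdef, hF, PiLp.zero_apply, zero_smul, Finset.sum_const_zero, sub_zero] at this ⊢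
    linarith
  have hμ2 : 0 < μ ^ 2 / (2 * β) := by have := hμ.1; positivity
  rw [mul_div_assoc', le_div_iff₀ (by exact_mod_cast hK)]
  calc (F (W K) - F Wstar) * K = K * (F (W K) - F Wstar) := mul_comm _ _
    _ ≤ (∑ i, |cstar i|) ^ 2 / (μ ^ 2 / (2 * β)) :=
        nat_mul_le_of_le_mul_of_mul_sq_le_sub (s := fun k => -s k) hμ2 hgap hdecr K
    _ ≤ Kbar * (2 * (f 0 - f cstar) / γ) / (μ ^ 2 / (2 * β)) := by
        simpa only [Fintype.card_fin] using div_le_div_of_nonneg_right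
          (sq_sum_abs_le_of_strongly_convex hγ hstrong hcmin) hμ2.le
    _ ≤ Kbar * (2 * ((1 / 2) * ‖X‖ ^ 2) / γ) / (μ ^ 2 / (2 * β)) := by gcongr
    _ = 2 * β * ‖X‖ ^ 2 / (γ * μ ^ 2) * Kbar := by field_simp

/-- Theorem 2 (accuracy–sparsity trade-off of Binary Matching Pursuit): if
`W* = Σ_{i} c*_i M_i` is a `K̄`-atom representation whose coefficient objective
`f(c) = F(Σ_i c_i M_i)` is `γ`-strongly convex with minimizer `c*`, then the Binary
Matching Pursuit iterates satisfy `F(W^K) − F(W*) ≤ (2β‖X‖²/(γμ²))·(K̄/K)` for all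
`K ≥ 1`. -/
theorem stmt_12 {E : Type*} [NormedAddCommGroup E] [InnerProductSpace ℝ E]
    [FiniteDimensional ℝ E]
    (X : E) (F : E → ℝ) (hF : ∀ W, F W = (1 / 2) * ‖X - W‖ ^ 2)
    (A : Set E) (hA : A.Nonempty) (hAc : IsCompact A) (hAs : ∀ M ∈ A, -M ∈ A)
    (μ β : ℝ) (hμ : μ ∈ Set.Ioc (0 : ℝ) 1) (hβ : 0 < β)
    (hsmooth : ∀ Δ ∈ Submodule.span ℝ A, ‖Δ‖ ≤ Real.sqrt β * atomicNorm A Δ)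
    (W : ℕ → E) (Msel : ℕ → E)
    (hW0 : W 0 = 0)
    (hMsel : ∀ k, Msel k ∈ A)
    (hgreedy : ∀ k, ⟪W k - X, Msel k⟫ ≤ μ * sInf ((fun M => ⟪W k - X, M⟫) '' A))
    (hmem : ∀ k, W (k + 1) ∈ Submodule.span ℝ (Msel '' Set.Iic k))
    (hcorr : ∀ k, ∀ W' ∈ Submodule.span ℝ (Msel '' Set.Iic k), F (W (k + 1)) ≤ F W')
    (Kbar : ℕ) (Matoms : Fin Kbar → E) (hinj : Function.Injective Matoms)
    (hMA : ∀ i, Matoms i ∈ A)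
    (γ : ℝ) (hγ : 0 < γ)
    (f : EuclideanSpace ℝ (Fin Kbar) → ℝ)
    (hfdef : ∀ c, f c = F (∑ i, c i • Matoms i))
    (hstrong : ∀ a b : EuclideanSpace ℝ (Fin Kbar),
      f a ≥ f b + ⟪gradient f b, a - b⟫ + (γ / 2) * ‖a - b‖ ^ 2)
    (cstar : EuclideanSpace ℝ (Fin Kbar)) (hcmin : ∀ c, f cstar ≤ f c)
    (Wstar : E) (hWstar : Wstar = ∑ i, cstar i • Matoms i) :
    ∀ K : ℕ, 1 ≤ K →
      F (W K) - F Wstar ≤ (2 * β * ‖X‖ ^ 2 / (γ * μ ^ 2)) * ((Kbar : ℝ) / (K : ℝ)) :=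
  stmt_12_general X F hF A hAs μ β hμ hβ hsmooth W Msel hW0 hMsel hgreedy hmem hcorr Kbar Matoms hMA
    γ hγ f hfdef hstrong cstar hcmin Wstar hWstar
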